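/- arXiv:1702.02505 — 7 statements merged into one kernel-verified Lean document; each statement's English description precedes it below -/
import Mathlib

section
/- Let h : ℝ^d → ℝ be continuously differentiable with L_h-Lipschitz continuous gradient and let σ : ℝ^d → (−∞,∞] be proper, lower semicontinuous with inf σ > −∞. Let t > 0, let v, w ∈ dom σ, and let u⁺ ∈ prox_t^σ(v − (1/t)∇h(w)). Then for every u ∈ dom σ and every s > 0, with g := h + σ, one has g(u⁺) ≤ g(u) + ((L_h + s)/2)‖u⁺ − u‖² + (t/2)‖u − v‖² − (t/2)‖u⁺ − v‖² + (L_h²/(2s))‖u − w‖². -/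
/-!
The descent lemma bounds `h u⁺` by its linearization at `u` plus `(L_h/2)‖u⁺ - u‖²`. In that
linearization the gradient is taken at `u` while the prox step used it at `w`; the mismatch
`⟪∇h u - ∇h w, u⁺ - u⟫` is at most `(s/2)‖u⁺ - u‖² + (L_h²/(2s))‖u - w‖²` by Cauchy–Schwarz,
the Lipschitz bound and Young's inequality. Comparing the prox objective at `u⁺` and at `u`, and
expanding the squares around `v`, bounds `σ u⁺` by `σ u + (t/2)‖u - v‖² - (t/2)‖u⁺ - v‖²`
plus exactly the term `⟪∇h w, u - u⁺⟫` needed to cancel the rest of the linearization.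
-/

open scoped RealInnerProductSpace

section Descent

variable {F : Type*} [NormedAddCommGroup F] [InnerProductSpace ℝ F] [CompleteSpace F]

theorem hasDerivAt_comp_lineMap_of_differentiable {f : F → ℝ} (hf : Differentiable ℝ f)
    (x y : F) (τ : ℝ) :
    HasDerivAt (fun τ : ℝ => f (x + τ • (y - x))) ⟪gradient f (x + τ • (y - x)), y - x⟫ τ := by
  have hline : HasDerivAt (fun τ : ℝ => x + τ • (y - x)) (y - x) τ := by
    simpa using ((hasDerivAt_id τ).smul_const (y - x)).const_add x
  exact (hf _).hasGradientAt.hasFDerivAt.comp_hasDerivAt τ hline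

theorem le_add_inner_gradient_add_sq_of_lipschitz_gradient {f : F → ℝ} {L : ℝ}
    (hf : Differentiable ℝ f) (hL : ∀ x y, ‖gradient f x - gradient f y‖ ≤ L * ‖x - y‖)
    (x y : F) :
    f y ≤ f x + ⟪gradient f x, y - x⟫ + L / 2 * ‖y - x‖ ^ 2 := by
  set φ : ℝ → ℝ := fun τ =>
    f (x + τ • (y - x)) - τ * ⟪gradient f x, y - x⟫ - L / 2 * τ ^ 2 * ‖y - x‖ ^ 2
  set φ' : ℝ → ℝ := fun τ =>
    ⟪gradient f (x + τ • (y - x)) - gradient f x, y - x⟫ - L * τ * ‖y - x‖ ^ 2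
  have hφ : ∀ τ, HasDerivAt φ (φ' τ) τ := fun τ => by
    refine (((hasDerivAt_comp_lineMap_of_differentiable hf x y τ).sub
      ((hasDerivAt_id τ).mul_const ⟪gradient f x, y - x⟫)).sub
      (((hasDerivAt_pow 2 τ).const_mul (L / 2)).mul_const (‖y - x‖ ^ 2))).congr_deriv ?_
    simp only [φ', inner_sub_left]
    ring
  have hφ'_nonpos : ∀ τ ∈ interior (Set.Ici (0 : ℝ)), φ' τ ≤ 0 := by
    intro τ hτ
    rw [interior_Ici, Set.mem_Ioi] at hτ
    have hlip : ‖gradient f (x + τ • (y - x)) - gradient f x‖ ≤ L * (τ * ‖y - x‖) := by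
      simpa [norm_smul, abs_of_pos hτ] using hL (x + τ • (y - x)) x
    have := calc ⟪gradient f (x + τ • (y - x)) - gradient f x, y - x⟫
        ≤ ‖gradient f (x + τ • (y - x)) - gradient f x‖ * ‖y - x‖ := real_inner_le_norm _ _
      _ ≤ L * (τ * ‖y - x‖) * ‖y - x‖ := by gcongr
      _ = L * τ * ‖y - x‖ ^ 2 := by ring
    simp only [φ']
    linarith
  have hanti : AntitoneOn φ (Set.Ici 0) :=
    antitoneOn_of_hasDerivWithinAt_nonpos (convex_Ici 0)
      (fun τ _ => (hφ τ).continuousAt.continuousWithinAt)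
      (fun τ _ => (hφ τ).hasDerivWithinAt) hφ'_nonpos
  have hφ_one_le := hanti Set.self_mem_Ici (Set.mem_Ici.2 zero_le_one) zero_le_one
  simp only [φ, zero_smul, one_smul, add_zero, add_sub_cancel, zero_mul, one_mul, one_pow,
    sub_zero, ne_eq, OfNat.ofNat_ne_zero, not_false_eq_true, zero_pow, mul_zero] at hφ_one_le
  linarith

end Descent

section Prox

variable {F : Type*} [NormedAddCommGroup F] [InnerProductSpace ℝ F]

theorem real_inner_le_mul_sq_add_sq_div {s : ℝ} (hs : 0 < s) (a b : F) :
    ⟪a, b⟫ ≤ s / 2 * ‖b‖ ^ 2 + ‖a‖ ^ 2 / (2 * s) := by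
  have hyoung : ‖a‖ * ‖b‖ ≤ s / 2 * ‖b‖ ^ 2 + ‖a‖ ^ 2 / (2 * s) := by
    have : s / 2 * ‖b‖ ^ 2 + ‖a‖ ^ 2 / (2 * s) - ‖a‖ * ‖b‖ = (s * ‖b‖ - ‖a‖) ^ 2 / (2 * s) := by
      field_simp
      ring
    linarith [div_nonneg (sq_nonneg (s * ‖b‖ - ‖a‖)) (by positivity : (0 : ℝ) ≤ 2 * s)]
  exact (real_inner_le_norm a b).trans hyoung

theorem mul_norm_sub_sub_inv_smul_sq {t : ℝ} (ht : t ≠ 0) (q v g : F) :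
    t / 2 * ‖q - (v - (1 / t) • g)‖ ^ 2 =
      t / 2 * ‖q - v‖ ^ 2 + ⟪g, q - v⟫ + ‖g‖ ^ 2 / (2 * t) := by
  rw [show q - (v - (1 / t) • g) = (q - v) + (1 / t) • g by abel, norm_add_sq_real,
    real_inner_smul_right, norm_smul, Real.norm_eq_abs, mul_pow, sq_abs, real_inner_comm]
  field_simp

variable [CompleteSpace F]

/-- The theorem for a real-valued `σ`, with `a = σ u` and `b = σ u⁺`. -/
theorem add_le_of_prox_gradient_step {f : F → ℝ} {L t s a b : ℝ}
    (hf : Differentiable ℝ f) (hL : ∀ x y, ‖gradient f x - gradient f y‖ ≤ L * ‖x - y‖)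
    (ht : t ≠ 0) (hs : 0 < s) {u uplus v w : F}
    (hprox : b + t / 2 * ‖uplus - (v - (1 / t) • gradient f w)‖ ^ 2
      ≤ a + t / 2 * ‖u - (v - (1 / t) • gradient f w)‖ ^ 2) :
    f uplus + b ≤ f u + a + ((L + s) / 2 * ‖uplus - u‖ ^ 2 + t / 2 * ‖u - v‖ ^ 2
      - t / 2 * ‖uplus - v‖ ^ 2 + L ^ 2 / (2 * s) * ‖u - w‖ ^ 2) := by
  rw [mul_norm_sub_sub_inv_smul_sq ht, mul_norm_sub_sub_inv_smul_sq ht] at hprox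
  have hdescent := le_add_inner_gradient_add_sq_of_lipschitz_gradient hf hL u uplus
  have hsplit : ⟪gradient f u, uplus - u⟫ = ⟪gradient f u - gradient f w, uplus - u⟫
      + ⟪gradient f w, uplus - v⟫ - ⟪gradient f w, u - v⟫ := by
    simp only [inner_sub_left, inner_sub_right]
    ring
  have hyoung := real_inner_le_mul_sq_add_sq_div hs (gradient f u - gradient f w) (uplus - u)
  have hmismatch : ‖gradient f u - gradient f w‖ ^ 2 / (2 * s) ≤ L ^ 2 / (2 * s) * ‖u - w‖ ^ 2 := by
    rw [div_mul_eq_mul_div, ← mul_pow]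
    gcongr
    exact hL u w
  linarith

end Prox

theorem stmt_0_general {d : ℕ}
    (h : EuclideanSpace ℝ (Fin d) → ℝ) (Lh : ℝ)
    (hcd : ContDiff ℝ 1 h)
    (hlip : ∀ x y : EuclideanSpace ℝ (Fin d),
      ‖gradient h x - gradient h y‖ ≤ Lh * ‖x - y‖)
    (σ : EuclideanSpace ℝ (Fin d) → EReal)
    (hnobot : ∀ x, σ x ≠ ⊥)
    (t : ℝ) (ht : 0 < t)
    (v w : EuclideanSpace ℝ (Fin d))
    (uplus : EuclideanSpace ℝ (Fin d))
    (hprox : ∀ q : EuclideanSpace ℝ (Fin d),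
      σ uplus + (((t / 2) * ‖uplus - (v - (1 / t) • gradient h w)‖ ^ 2 : ℝ) : EReal)
        ≤ σ q + (((t / 2) * ‖q - (v - (1 / t) • gradient h w)‖ ^ 2 : ℝ) : EReal))
    (u : EuclideanSpace ℝ (Fin d)) (hu : σ u ≠ ⊤) (s : ℝ) (hs : 0 < s) :
    (h uplus : EReal) + σ uplus
      ≤ (h u : EReal) + σ u
        + ((((Lh + s) / 2) * ‖uplus - u‖ ^ 2 + (t / 2) * ‖u - v‖ ^ 2
            - (t / 2) * ‖uplus - v‖ ^ 2 + (Lh ^ 2 / (2 * s)) * ‖u - w‖ ^ 2 : ℝ) : EReal) := by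
  obtain ⟨a, ha⟩ : ∃ a : ℝ, σ u = a := ⟨_, (EReal.coe_toReal hu (hnobot u)).symm⟩
  have hprox_u := hprox u
  have huplus : σ uplus ≠ ⊤ := by
    intro htop
    rw [htop, EReal.top_add_coe, ha, ← EReal.coe_add, top_le_iff] at hprox_u
    exact EReal.coe_ne_top _ hprox_u
  obtain ⟨b, hb⟩ : ∃ b : ℝ, σ uplus = b :=
    ⟨_, (EReal.coe_toReal huplus (hnobot uplus)).symm⟩
  rw [ha, hb] at hprox_u ⊢
  exact_mod_cast add_le_of_prox_gradient_step (hcd.differentiable one_ne_zero) hlip ht.ne' hs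
    (by exact_mod_cast hprox_u)

/-- Proximal inequality, Lemma 3.3 of the paper.
Let `h : ℝ^d → ℝ` be continuously differentiable with `L_h`-Lipschitz gradient and let
`σ : ℝ^d → (−∞,∞]` be proper, lower semicontinuous and bounded below.  Let `t > 0`,
`v, w ∈ dom σ` and `u⁺ ∈ prox_t^σ (v − (1/t) ∇h(w))`.  Then for every `u ∈ dom σ` and
every `s > 0`, with `g := h + σ`,
`g(u⁺) ≤ g(u) + ((L_h+s)/2)‖u⁺−u‖² + (t/2)‖u−v‖² − (t/2)‖u⁺−v‖² + (L_h²/(2s))‖u−w‖²`. -/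
theorem stmt_0 {d : ℕ}
    (h : EuclideanSpace ℝ (Fin d) → ℝ) (Lh : ℝ) (hLh : 0 ≤ Lh)
    (hcd : ContDiff ℝ 1 h)
    (hlip : ∀ x y : EuclideanSpace ℝ (Fin d),
      ‖gradient h x - gradient h y‖ ≤ Lh * ‖x - y‖)
    (σ : EuclideanSpace ℝ (Fin d) → EReal)
    (hproper : ∃ x, σ x ≠ ⊤) (hnobot : ∀ x, σ x ≠ ⊥)
    (hlsc : LowerSemicontinuous σ)
    (hbdd : ∃ m : ℝ, ∀ x, (m : EReal) ≤ σ x)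
    (t : ℝ) (ht : 0 < t)
    (v w : EuclideanSpace ℝ (Fin d)) (hv : σ v ≠ ⊤) (hw : σ w ≠ ⊤)
    (uplus : EuclideanSpace ℝ (Fin d))
    (hprox : ∀ q : EuclideanSpace ℝ (Fin d),
      σ uplus + (((t / 2) * ‖uplus - (v - (1 / t) • gradient h w)‖ ^ 2 : ℝ) : EReal)
        ≤ σ q + (((t / 2) * ‖q - (v - (1 / t) • gradient h w)‖ ^ 2 : ℝ) : EReal))
    (u : EuclideanSpace ℝ (Fin d)) (hu : σ u ≠ ⊤) (s : ℝ) (hs : 0 < s) :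
    (h uplus : EReal) + σ uplus
      ≤ (h u : EReal) + σ u
        + ((((Lh + s) / 2) * ‖uplus - u‖ ^ 2 + (t / 2) * ‖u - v‖ ^ 2
            - (t / 2) * ‖uplus - v‖ ^ 2 + (Lh ^ 2 / (2 * s)) * ‖u - w‖ ^ 2 : ℝ) : EReal) :=
  stmt_0_general h Lh hcd hlip σ hnobot t ht v w uplus hprox u hu s hs
end

section
/- Let h : ℝ^d → ℝ be continuously differentiable with L_h-Lipschitz continuous gradient and let σ : ℝ^d → (−∞,∞] be proper, lower semicontinuous, convex and with inf σ > −∞. Let t > 0, let v, w ∈ dom σ, and let u⁺ ∈ prox_t^σ(v − (1/t)∇h(w)). Then for every u ∈ dom σ and every s > 0, with g := h + σ, one has the tighter bound g(u⁺) ≤ g(u) + ((L_h + s − t)/2)‖u⁺ − u‖² + (t/2)‖u − v‖² − (t/2)‖u⁺ − v‖² + (L_h²/(2s))‖u − w‖². -/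
open scoped RealInnerProductSpace
open Set Filter Topology

/-!
Three inequalities are added up. The descent lemma bounds `h u⁺` by the linearisation of `h`
at `u` plus `(L_h/2)‖u⁺ - u‖²`. Since `σ` is convex, the prox objective is `t`-strongly convex,
so its minimiser `u⁺` satisfies the three-point inequality, which after expanding the shifted
centre `v - (1/t)∇h(w)` trades `σ u⁺` for `σ u` at the cost of `⟪∇h w, u - u⁺⟫ - (t/2)‖u⁺ - u‖²`.
The mismatch `⟪∇h u - ∇h w, u⁺ - u⟫` is finally split by Young's inequality with weight `s`.
-/

lemma le_sub_of_forall_mem_Ioo {A B C : ℝ} (h : ∀ a ∈ Ioo (0 : ℝ) 1, A ≤ B - (1 - a) * C) :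
    A ≤ B - C := by
  have hlim : Tendsto (fun a : ℝ => B - (1 - a) * C) (𝓝[>] 0) (𝓝 (B - C)) := by
    have : Continuous (fun a : ℝ => B - (1 - a) * C) := by fun_prop
    simpa using (this.tendsto 0).mono_left nhdsWithin_le_nhds
  exact ge_of_tendsto hlim (eventually_of_mem (Ioo_mem_nhdsGT zero_lt_one) h)

section InnerProductSpace

variable {E : Type*} [NormedAddCommGroup E] [InnerProductSpace ℝ E]

lemma norm_one_sub_smul_add_smul_sub_sq (x y p : E) (a : ℝ) :
    ‖((1 - a) • x + a • y) - p‖ ^ 2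
      = (1 - a) * ‖x - p‖ ^ 2 + a * ‖y - p‖ ^ 2 - a * (1 - a) * ‖x - y‖ ^ 2 := by
  rw [show ((1 - a) • x + a • y) - p = (1 - a) • (x - p) + a • (y - p) by module,
    show x - y = (x - p) - (y - p) by abel]
  generalize x - p = X, y - p = Y
  rw [norm_add_sq_real, norm_sub_sq_real, norm_smul, norm_smul, real_inner_smul_left,
    real_inner_smul_right, Real.norm_eq_abs, Real.norm_eq_abs, mul_pow, mul_pow, sq_abs, sq_abs]
  ring

lemma half_mul_norm_sub_sq_sub_shift (x y v g : E) {t : ℝ} (ht : t ≠ 0) :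
    t / 2 * ‖x - (v - (1 / t) • g)‖ ^ 2 - t / 2 * ‖y - (v - (1 / t) • g)‖ ^ 2
      = t / 2 * ‖x - v‖ ^ 2 - t / 2 * ‖y - v‖ ^ 2 + ⟪x - y, g⟫ := by
  rw [show x - (v - (1 / t) • g) = (x - v) + (1 / t) • g by abel,
    show y - (v - (1 / t) • g) = (y - v) + (1 / t) • g by abel,
    show x - y = (x - v) - (y - v) by abel]
  generalize x - v = X, y - v = Y
  rw [norm_add_sq_real, norm_add_sq_real, inner_sub_left, real_inner_smul_right,
    real_inner_smul_right]
  field_simp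
  ring

lemma real_inner_le_half_mul_sq_add_sq_div {s : ℝ} (hs : 0 < s) (a b : E) :
    ⟪a, b⟫ ≤ s / 2 * ‖b‖ ^ 2 + ‖a‖ ^ 2 / (2 * s) := by
  have h := norm_sub_sq_real a (s • b)
  rw [real_inner_smul_right, norm_smul, Real.norm_of_nonneg hs.le, mul_pow] at h
  have hsq : s / 2 * ‖b‖ ^ 2 + ‖a‖ ^ 2 / (2 * s) - ⟪a, b⟫ = ‖a - s • b‖ ^ 2 / (2 * s) := by
    rw [h]; field_simp; ring
  linarith [div_nonneg (sq_nonneg ‖a - s • b‖) (by positivity : (0 : ℝ) ≤ 2 * s)]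

lemma le_add_inner_gradient_add_sq_of_lipschitz [CompleteSpace E] {f : E → ℝ} {L : ℝ}
    (hf : Differentiable ℝ f) (hL : ∀ x y, ‖gradient f x - gradient f y‖ ≤ L * ‖x - y‖)
    (x y : E) :
    f y ≤ f x + ⟪gradient f x, y - x⟫ + L / 2 * ‖y - x‖ ^ 2 := by
  set d := y - x
  let φ : ℝ → ℝ := fun τ => f (x + τ • d) - τ * ⟪gradient f x, d⟫ - L / 2 * τ ^ 2 * ‖d‖ ^ 2
  have hφ : ∀ τ, HasDerivAt φ
      (⟪gradient f (x + τ • d), d⟫ - ⟪gradient f x, d⟫ - L * τ * ‖d‖ ^ 2) τ := by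
    intro τ
    have hline : HasDerivAt (fun τ : ℝ => x + τ • d) d τ := by
      simpa using ((hasDerivAt_id τ).smul_const d).const_add x
    have hfτ := ((hf _).hasGradientAt.hasFDerivAt).comp_hasDerivAt τ hline
    refine ((hfτ.sub ((hasDerivAt_id τ).mul_const ⟪gradient f x, d⟫)).sub
      (((hasDerivAt_pow 2 τ).const_mul (L / 2)).mul_const (‖d‖ ^ 2))).congr_deriv ?_
    simp only [InnerProductSpace.toDual_apply_apply]
    ring
  -- the derivative of `φ` is nonpositive on `[0, 1]` by Cauchy–Schwarz and the Lipschitz bound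
  have hanti : AntitoneOn φ (Icc 0 1) := by
    refine antitoneOn_of_deriv_nonpos (convex_Icc 0 1)
      (fun τ _ => (hφ τ).continuousAt.continuousWithinAt)
      (fun τ _ => (hφ τ).differentiableAt.differentiableWithinAt) fun τ hτ => ?_
    rw [interior_Icc] at hτ
    rw [(hφ τ).deriv, ← inner_sub_left]
    calc ⟪gradient f (x + τ • d) - gradient f x, d⟫ - L * τ * ‖d‖ ^ 2
        ≤ L * ‖(x + τ • d) - x‖ * ‖d‖ - L * τ * ‖d‖ ^ 2 := by
          gcongr
          exact (real_inner_le_norm _ _).trans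
            (mul_le_mul_of_nonneg_right (hL _ _) (norm_nonneg _))
      _ = 0 := by
          rw [add_sub_cancel_left, norm_smul, Real.norm_of_nonneg hτ.1.le]; ring
  have h01 := hanti (left_mem_Icc.2 zero_le_one) (right_mem_Icc.2 zero_le_one) zero_le_one
  simp only [φ, zero_smul, add_zero, one_smul, zero_mul, sub_zero, one_mul, one_pow,
    d, add_sub_cancel] at h01
  linarith

lemma prox_three_point_inequality (σ : E → EReal) (hσ : ∀ x, σ x ≠ ⊥)
    (hconv : ∀ x y : E, ∀ a b : ℝ, 0 ≤ a → 0 ≤ b → a + b = 1 →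
      σ (a • x + b • y) ≤ (a : EReal) * σ x + (b : EReal) * σ y)
    (t : ℝ) {p x : E}
    (hmin : ∀ q, σ x + ((t / 2 * ‖x - p‖ ^ 2 : ℝ) : EReal)
      ≤ σ q + ((t / 2 * ‖q - p‖ ^ 2 : ℝ) : EReal))
    {u : E} (hu : σ u ≠ ⊤) :
    ∃ a b : ℝ, σ x = a ∧ σ u = b ∧
      a + t / 2 * ‖x - p‖ ^ 2 + t / 2 * ‖x - u‖ ^ 2 ≤ b + t / 2 * ‖u - p‖ ^ 2 := by
  obtain ⟨b, hb⟩ : ∃ b : ℝ, σ u = b := ⟨(σ u).toReal, (EReal.coe_toReal hu (hσ u)).symm⟩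
  have hx : σ x ≠ ⊤ := by
    intro hx
    have := hmin u
    rw [hx, hb, EReal.top_add_coe, ← EReal.coe_add, top_le_iff] at this
    exact EReal.coe_ne_top _ this
  obtain ⟨a, ha⟩ : ∃ a : ℝ, σ x = a := ⟨(σ x).toReal, (EReal.coe_toReal hx (hσ x)).symm⟩
  refine ⟨a, b, ha, hb, le_sub_iff_add_le.mp (le_sub_of_forall_mem_Ioo fun c hc => ?_)⟩
  -- compare `x` with the point `(1 - c) • x + c • u` of the segment towards `u`, then let `c → 0`
  have hσq := hconv x u (1 - c) c (by linarith [hc.2]) hc.1.le (by ring)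
  rw [ha, hb, ← EReal.coe_mul, ← EReal.coe_mul, ← EReal.coe_add] at hσq
  have hq := (hmin ((1 - c) • x + c • u)).trans (add_le_add_left hσq _)
  rw [ha, ← EReal.coe_add, ← EReal.coe_add, EReal.coe_le_coe_iff,
    norm_one_sub_smul_add_smul_sub_sq] at hq
  nlinarith [hc.1]

end InnerProductSpace

theorem stmt_2_general {d : ℕ}
    (h : EuclideanSpace ℝ (Fin d) → ℝ) (Lh : ℝ)
    (hcd : ContDiff ℝ 1 h)
    (hlip : ∀ x y : EuclideanSpace ℝ (Fin d),
      ‖gradient h x - gradient h y‖ ≤ Lh * ‖x - y‖)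
    (σ : EuclideanSpace ℝ (Fin d) → EReal)
    (hnobot : ∀ x, σ x ≠ ⊥)
    (hconv : ∀ x y : EuclideanSpace ℝ (Fin d), ∀ a b : ℝ, 0 ≤ a → 0 ≤ b → a + b = 1 →
      σ (a • x + b • y) ≤ (a : EReal) * σ x + (b : EReal) * σ y)
    (t : ℝ) (ht : 0 < t)
    (v w : EuclideanSpace ℝ (Fin d))
    (uplus : EuclideanSpace ℝ (Fin d))
    (hprox : ∀ q : EuclideanSpace ℝ (Fin d),
      σ uplus + (((t / 2) * ‖uplus - (v - (1 / t) • gradient h w)‖ ^ 2 : ℝ) : EReal)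
        ≤ σ q + (((t / 2) * ‖q - (v - (1 / t) • gradient h w)‖ ^ 2 : ℝ) : EReal))
    (u : EuclideanSpace ℝ (Fin d)) (hu : σ u ≠ ⊤) (s : ℝ) (hs : 0 < s) :
    (h uplus : EReal) + σ uplus
      ≤ (h u : EReal) + σ u
        + ((((Lh + s - t) / 2) * ‖uplus - u‖ ^ 2 + (t / 2) * ‖u - v‖ ^ 2
            - (t / 2) * ‖uplus - v‖ ^ 2 + (Lh ^ 2 / (2 * s)) * ‖u - w‖ ^ 2 : ℝ) : EReal) := by
  obtain ⟨sp, su, hsp, hsu, hprox'⟩ :=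
    prox_three_point_inequality σ hnobot hconv t hprox hu
  have hshift := half_mul_norm_sub_sq_sub_shift u uplus v (gradient h w) ht.ne'
  have hdescent := le_add_inner_gradient_add_sq_of_lipschitz (hcd.differentiable one_ne_zero)
    hlip u uplus
  have hcross : ⟪gradient h u, uplus - u⟫ + ⟪u - uplus, gradient h w⟫
      ≤ s / 2 * ‖uplus - u‖ ^ 2 + Lh ^ 2 / (2 * s) * ‖u - w‖ ^ 2 := by
    have hgrad : ‖gradient h u - gradient h w‖ ^ 2 ≤ (Lh * ‖u - w‖) ^ 2 :=
      pow_le_pow_left₀ (norm_nonneg _) (hlip u w) 2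
    calc _ = ⟪gradient h u - gradient h w, uplus - u⟫ := by
          rw [inner_sub_left (gradient h u), ← neg_sub uplus u, inner_neg_left,
            real_inner_comm (gradient h w)]
          ring
      _ ≤ s / 2 * ‖uplus - u‖ ^ 2 + ‖gradient h u - gradient h w‖ ^ 2 / (2 * s) :=
          real_inner_le_half_mul_sq_add_sq_div hs _ _
      _ ≤ _ := by rw [div_mul_eq_mul_div (Lh ^ 2), ← mul_pow]; gcongr
  rw [hsp, hsu]
  norm_cast
  linarith

/-- tighter proximal inequality in the convex case.
Let `h : ℝ^d → ℝ` be continuously differentiable with `L_h`-Lipschitz gradient and let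
`σ : ℝ^d → (−∞,∞]` be proper, lower semicontinuous, convex and bounded below.  Let `t > 0`,
`v, w ∈ dom σ` and `u⁺ ∈ prox_t^σ (v − (1/t) ∇h(w))`.  Then for every `u ∈ dom σ` and
every `s > 0`, with `g := h + σ`,
`g(u⁺) ≤ g(u) + ((L_h+s−t)/2)‖u⁺−u‖² + (t/2)‖u−v‖² − (t/2)‖u⁺−v‖² + (L_h²/(2s))‖u−w‖²`. -/
theorem stmt_2 {d : ℕ}
    (h : EuclideanSpace ℝ (Fin d) → ℝ) (Lh : ℝ) (hLh : 0 ≤ Lh)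
    (hcd : ContDiff ℝ 1 h)
    (hlip : ∀ x y : EuclideanSpace ℝ (Fin d),
      ‖gradient h x - gradient h y‖ ≤ Lh * ‖x - y‖)
    (σ : EuclideanSpace ℝ (Fin d) → EReal)
    (hproper : ∃ x, σ x ≠ ⊤) (hnobot : ∀ x, σ x ≠ ⊥)
    (hlsc : LowerSemicontinuous σ)
    (hconv : ∀ x y : EuclideanSpace ℝ (Fin d), ∀ a b : ℝ, 0 ≤ a → 0 ≤ b → a + b = 1 →
      σ (a • x + b • y) ≤ (a : EReal) * σ x + (b : EReal) * σ y)
    (hbdd : ∃ m : ℝ, ∀ x, (m : EReal) ≤ σ x)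
    (t : ℝ) (ht : 0 < t)
    (v w : EuclideanSpace ℝ (Fin d)) (hv : σ v ≠ ⊤) (hw : σ w ≠ ⊤)
    (uplus : EuclideanSpace ℝ (Fin d))
    (hprox : ∀ q : EuclideanSpace ℝ (Fin d),
      σ uplus + (((t / 2) * ‖uplus - (v - (1 / t) • gradient h w)‖ ^ 2 : ℝ) : EReal)
        ≤ σ q + (((t / 2) * ‖q - (v - (1 / t) • gradient h w)‖ ^ 2 : ℝ) : EReal))
    (u : EuclideanSpace ℝ (Fin d)) (hu : σ u ≠ ⊤) (s : ℝ) (hs : 0 < s) :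
    (h uplus : EReal) + σ uplus
      ≤ (h u : EReal) + σ u
        + ((((Lh + s - t) / 2) * ‖uplus - u‖ ^ 2 + (t / 2) * ‖u - v‖ ^ 2
            - (t / 2) * ‖uplus - v‖ ^ 2 + (Lh ^ 2 / (2 * s)) * ‖u - w‖ ^ 2 : ℝ) : EReal) :=
  stmt_2_general h Lh hcd hlip σ hnobot hconv t ht v w uplus hprox u hu s hs
end

section
/- Define g(α, β, δ, τ, L) = τ(1 − α) − (1 + β)L − δ and h(α, β, δ, τ, L) = δ − τα − Lβ for nonnegative real arguments. Let ε > 0 and ᾱ > 0 satisfy 0 ≤ α ≤ ᾱ < (1/2)(1 − ε), let 0 ≤ L ≤ λ for some λ > 0, and let 0 ≤ β ≤ β̄ with β̄ > 0. Set δ* = ((ᾱ + β̄)/(1 − ε − 2ᾱ))·λ and τ* = ((1 + ε)δ* + (1 + β)L)/(1 − α). Then g(α, β, δ*, τ*, L) = ε·δ* and h(α, β, δ*, τ*, L) ≥ ε·δ*. -/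
/-!
Clearing the denominator `1 - α > 0` of `τ*`, the equation for `g` is immediate and
`(1 - α) (h - ε δ*) = δ* (1 - ε - 2α) - L (α + β)`. Since `δ* ≥ 0`, the right-hand side is at
least `δ* (1 - ε - 2ᾱ) - λ (ᾱ + β̄)`, which vanishes by the choice of `δ*`.
-/

section ParameterChoice

variable {ε α β δ τ L : ℝ}

theorem sub_mul_one_sub_of_eq_div (hα : 1 - α ≠ 0)
    (hτ : τ = ((1 + ε) * δ + (1 + β) * L) / (1 - α)) :
    τ * (1 - α) - (1 + β) * L - δ = ε * δ := by
  rw [hτ, div_mul_cancel₀ _ hα]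
  ring

theorem one_sub_mul_slack_of_eq_div (hα : 1 - α ≠ 0)
    (hτ : τ = ((1 + ε) * δ + (1 + β) * L) / (1 - α)) :
    (1 - α) * (δ - τ * α - L * β - ε * δ) = δ * (1 - ε - 2 * α) - L * (α + β) := by
  have hτ' : τ * (1 - α) = (1 + ε) * δ + (1 + β) * L := by
    rw [hτ, div_mul_cancel₀ _ hα]
  linear_combination (-α) * hτ'

theorem mul_add_le_div_mul_mul {αbar βbar lam : ℝ}
    (hα0 : 0 ≤ α) (hααbar : α ≤ αbar) (hβ0 : 0 ≤ β) (hββbar : β ≤ βbar)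
    (hLlam : L ≤ lam) (hlam : 0 ≤ lam) (hαbarlt : 2 * αbar < 1 - ε) :
    L * (α + β) ≤ (αbar + βbar) / (1 - ε - 2 * αbar) * lam * (1 - ε - 2 * α) := by
  have hpos : 0 < 1 - ε - 2 * αbar := by linarith
  have hδ0 : 0 ≤ (αbar + βbar) / (1 - ε - 2 * αbar) * lam := by
    have : 0 ≤ αbar + βbar := by linarith
    positivity
  calc L * (α + β) ≤ lam * (αbar + βbar) := by
        exact mul_le_mul hLlam (by linarith) (by linarith) hlam
    _ = (αbar + βbar) / (1 - ε - 2 * αbar) * lam * (1 - ε - 2 * αbar) := by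
        rw [mul_right_comm, div_mul_cancel₀ _ hpos.ne', mul_comm]
    _ ≤ (αbar + βbar) / (1 - ε - 2 * αbar) * lam * (1 - ε - 2 * α) := by
        gcongr

end ParameterChoice

theorem stmt_3_general (g h : ℝ → ℝ → ℝ → ℝ → ℝ → ℝ)
    (hg : ∀ α β δ τ L, g α β δ τ L = τ * (1 - α) - (1 + β) * L - δ)
    (hh : ∀ α β δ τ L, h α β δ τ L = δ - τ * α - L * β)
    (ε αbar α β βbar L lam δstar τstar : ℝ)
    (hε : 0 < ε)
    (hα0 : 0 ≤ α) (hααbar : α ≤ αbar) (hαbarlt : αbar < (1 / 2) * (1 - ε))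
    (hLlam : L ≤ lam) (hlam : 0 < lam)
    (hβ0 : 0 ≤ β) (hββbar : β ≤ βbar)
    (hδ : δstar = (αbar + βbar) / (1 - ε - 2 * αbar) * lam)
    (hτ : τstar = ((1 + ε) * δstar + (1 + β) * L) / (1 - α)) :
    g α β δstar τstar L = ε * δstar ∧ h α β δstar τstar L ≥ ε * δstar := by
  have hα1 : 0 < 1 - α := by linarith
  refine ⟨by rw [hg]; exact sub_mul_one_sub_of_eq_div hα1.ne' hτ, ?_⟩
  have hslack : 0 ≤ (1 - α) * (δstar - τstar * α - L * β - ε * δstar) := by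
    rw [one_sub_mul_slack_of_eq_div hα1.ne' hτ, sub_nonneg, hδ]
    exact mul_add_le_div_mul_mul hα0 hααbar hβ0 hββbar hLlam hlam.le (by linarith)
  rw [hh, ge_iff_le, ← sub_nonneg]
  exact (mul_nonneg_iff_of_pos_left hα1).mp hslack

/-- technical parameter lemma, Lemma 4.4 of the paper.
With `g(α,β,δ,τ,L) = τ(1−α) − (1+β)L − δ` and `h(α,β,δ,τ,L) = δ − τα − Lβ`,
if `ε > 0`, `0 < ᾱ`, `0 ≤ α ≤ ᾱ < (1/2)(1−ε)`, `0 ≤ L ≤ λ` with `λ > 0`,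
`0 ≤ β ≤ β̄` with `β̄ > 0`, `δ* = ((ᾱ+β̄)/(1−ε−2ᾱ))·λ` and
`τ* = ((1+ε)δ* + (1+β)L)/(1−α)`, then `g(α,β,δ*,τ*,L) = ε·δ*` and
`h(α,β,δ*,τ*,L) ≥ ε·δ*`. -/
theorem stmt_3 (g h : ℝ → ℝ → ℝ → ℝ → ℝ → ℝ)
    (hg : ∀ α β δ τ L, g α β δ τ L = τ * (1 - α) - (1 + β) * L - δ)
    (hh : ∀ α β δ τ L, h α β δ τ L = δ - τ * α - L * β)
    (ε αbar α β βbar L lam δstar τstar : ℝ)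
    (hε : 0 < ε) (hαbar : 0 < αbar)
    (hα0 : 0 ≤ α) (hααbar : α ≤ αbar) (hαbarlt : αbar < (1 / 2) * (1 - ε))
    (hL0 : 0 ≤ L) (hLlam : L ≤ lam) (hlam : 0 < lam)
    (hβ0 : 0 ≤ β) (hββbar : β ≤ βbar) (hβbar : 0 < βbar)
    (hδ : δstar = (αbar + βbar) / (1 - ε - 2 * αbar) * lam)
    (hτ : τstar = ((1 + ε) * δstar + (1 + β) * L) / (1 - α)) :
    g α β δstar τstar L = ε * δstar ∧ h α β δstar τstar L ≥ ε * δstar :=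
  stmt_3_general g h hg hh ε αbar α β βbar L lam δstar τstar hε hα0 hααbar hαbarlt hLlam hlam hβ0
    hββbar hδ hτ
end

section
/- Let ε > 0 and ᾱ > 0 satisfy 0 ≤ α ≤ ᾱ < 1 − ε, let 0 ≤ L ≤ λ for some λ > 0, and let 0 ≤ β ≤ β̄ with β̄ > 0. Set δ* = ((ᾱ + 2β̄)/(2(1 − ε − ᾱ)))·λ and τ* = ((1 + ε)δ* + (1 + β)L)/(2 − α). Then τ*(2 − α) − (1 + β)L − δ* = ε·δ* and δ* − τ*·α − L·β ≥ ε·δ*. -/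
/-!
Since `2 - α > 0`, clearing the denominator of `τ*` turns the second claim into
`(α + 2β) L ≤ 2 (1 - ε - α) δ*`. By construction `2 (1 - ε - ᾱ) δ* = (ᾱ + 2β̄) λ`, which
dominates `(α + 2β) L` termwise, and replacing `ᾱ` there by `α ≤ ᾱ` only enlarges it
because `δ* ≥ 0`.
-/

section ParameterChoice

variable {K : Type*} [Field K]

def deltaStar (ε αbar βbar lam : K) : K := (αbar + 2 * βbar) / (2 * (1 - ε - αbar)) * lam

def tauStar (ε α β L δ : K) : K := ((1 + ε) * δ + (1 + β) * L) / (2 - α)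

theorem two_mul_deltaStar {ε αbar βbar lam : K} (h : 2 * (1 - ε - αbar) ≠ 0) :
    2 * (1 - ε - αbar) * deltaStar ε αbar βbar lam = (αbar + 2 * βbar) * lam := by
  rw [deltaStar, ← mul_assoc, mul_div_cancel₀ _ h]

theorem tauStar_mul_sub_sub {ε α β L δ : K} (h : 2 - α ≠ 0) :
    tauStar ε α β L δ * (2 - α) - (1 + β) * L - δ = ε * δ := by
  rw [tauStar, div_mul_cancel₀ _ h]
  ring

theorem sub_tauStar_mul_sub_sub {ε α β L δ : K} (h : 2 - α ≠ 0) :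
    δ - tauStar ε α β L δ * α - L * β - ε * δ =
      (2 * (1 - ε - α) * δ - (α + 2 * β) * L) / (2 - α) := by
  rw [tauStar, eq_div_iff h]
  field_simp
  ring

variable [LinearOrder K] [IsStrictOrderedRing K]

theorem le_sub_tauStar_mul_sub {ε α β L δ : K} (h : 0 < 2 - α)
    (hmargin : (α + 2 * β) * L ≤ 2 * (1 - ε - α) * δ) :
    ε * δ ≤ δ - tauStar ε α β L δ * α - L * β := by
  rw [← sub_nonneg, sub_tauStar_mul_sub_sub h.ne']
  exact div_nonneg (sub_nonneg.2 hmargin) h.le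

theorem deltaStar_margin {ε α αbar β βbar L lam : K} (hgap : 0 < 1 - ε - αbar)
    (hα0 : 0 ≤ α) (hααbar : α ≤ αbar) (hβ0 : 0 ≤ β) (hββbar : β ≤ βbar)
    (hL0 : 0 ≤ L) (hLlam : L ≤ lam) :
    (α + 2 * β) * L ≤ 2 * (1 - ε - α) * deltaStar ε αbar βbar lam := by
  have hweight : α + 2 * β ≤ αbar + 2 * βbar := by linarith
  have hgap2 : 0 < 2 * (1 - ε - αbar) := by positivity
  have hδ : 2 * (1 - ε - αbar) * deltaStar ε αbar βbar lam = (αbar + 2 * βbar) * lam :=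
    two_mul_deltaStar hgap2.ne'
  have hδ0 : 0 ≤ deltaStar ε αbar βbar lam :=
    nonneg_of_mul_nonneg_right (hδ ▸ mul_nonneg (by linarith) (by linarith)) hgap2
  calc (α + 2 * β) * L ≤ (αbar + 2 * βbar) * lam := mul_le_mul hweight hLlam hL0 (by linarith)
    _ = 2 * (1 - ε - αbar) * deltaStar ε αbar βbar lam := hδ.symm
    _ ≤ 2 * (1 - ε - α) * deltaStar ε αbar βbar lam := by gcongr

end ParameterChoice

theorem stmt_4_general (ε αbar α β βbar L lam δstar τstar : ℝ)
    (hε : 0 < ε)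
    (hα0 : 0 ≤ α) (hααbar : α ≤ αbar) (hαbarlt : αbar < 1 - ε)
    (hL0 : 0 ≤ L) (hLlam : L ≤ lam)
    (hβ0 : 0 ≤ β) (hββbar : β ≤ βbar)
    (hδ : δstar = (αbar + 2 * βbar) / (2 * (1 - ε - αbar)) * lam)
    (hτ : τstar = ((1 + ε) * δstar + (1 + β) * L) / (2 - α)) :
    τstar * (2 - α) - (1 + β) * L - δstar = ε * δstar ∧
      δstar - τstar * α - L * β ≥ ε * δstar := by
  obtain rfl : τstar = tauStar ε α β L δstar := hτ
  obtain rfl : δstar = deltaStar ε αbar βbar lam := hδ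
  have hgap : 0 < 1 - ε - αbar := by linarith
  have h2α : 0 < 2 - α := by linarith
  exact ⟨tauStar_mul_sub_sub h2α.ne',
    le_sub_tauStar_mul_sub h2α (deltaStar_margin hgap hα0 hααbar hβ0 hββbar hL0 hLlam)⟩

/-- convex-case parameter lemma.
If `ε > 0`, `0 < ᾱ`, `0 ≤ α ≤ ᾱ < 1 − ε`, `0 ≤ L ≤ λ` with `λ > 0`,
`0 ≤ β ≤ β̄` with `β̄ > 0`, `δ* = ((ᾱ+2β̄)/(2(1−ε−ᾱ)))·λ` and
`τ* = ((1+ε)δ* + (1+β)L)/(2−α)`, then `τ*(2−α) − (1+β)L − δ* = ε·δ*` and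
`δ* − τ*·α − L·β ≥ ε·δ*`. -/
theorem stmt_4 (ε αbar α β βbar L lam δstar τstar : ℝ)
    (hε : 0 < ε) (hαbar : 0 < αbar)
    (hα0 : 0 ≤ α) (hααbar : α ≤ αbar) (hαbarlt : αbar < 1 - ε)
    (hL0 : 0 ≤ L) (hLlam : L ≤ lam) (hlam : 0 < lam)
    (hβ0 : 0 ≤ β) (hββbar : β ≤ βbar) (hβbar : 0 < βbar)
    (hδ : δstar = (αbar + 2 * βbar) / (2 * (1 - ε - αbar)) * lam)
    (hτ : τstar = ((1 + ε) * δstar + (1 + β) * L) / (2 - α)) :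
    τstar * (2 - α) - (1 + β) * L - δstar = ε * δstar ∧
      δstar - τstar * α - L * β ≥ ε * δstar :=
  stmt_4_general ε αbar α β βbar L lam δstar τstar hε hα0 hααbar hαbarlt hL0 hLlam hβ0 hββbar hδ hτ
end

section
/- Consider the iPALM iteration at step k with arbitrary parameters s1^k > 0 and s2^k > 0. Then F(x1^{k+1}, x2^{k+1}) ≤ F(x1^k, x2^k) + (1/s1^k)(L1(x2^k)²(β1^k)² + s1^k·τ1^k·α1^k)·Δ1^k + (1/s2^k)(L2(x1^{k+1})²(β2^k)² + s2^k·τ2^k·α2^k)·Δ2^k + (L1(x2^k) + s1^k − τ1^k(1 − α1^k))·Δ1^{k+1} + (L2(x1^{k+1}) + s2^k − τ2^k(1 − α2^k))·Δ2^{k+1}. -/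
open InnerProductSpace

variable {E : Type*} [NormedAddCommGroup E] [InnerProductSpace ℝ E] [CompleteSpace E]

/-- Descent lemma: quadratic upper bound for a function with Lipschitz gradient. -/
lemma descent_lemma {g : E → ℝ} {L : ℝ} (hg : Differentiable ℝ g)
    (hlip : ∀ u v, ‖gradient g u - gradient g v‖ ≤ L * ‖u - v‖) (x y : E) :
    g y ≤ g x + (inner ℝ (gradient g x) (y - x) : ℝ) + L / 2 * ‖y - x‖ ^ 2 := by
  set d := y - x with hd
  set ψ : ℝ → ℝ := fun t => g (x + t • d) - t * (inner ℝ (gradient g x) d : ℝ)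
    - L / 2 * t ^ 2 * ‖d‖ ^ 2 with hψ
  have hline : ∀ t : ℝ, HasDerivAt (fun t : ℝ => x + t • d) d t := by
    intro t
    simpa using ((hasDerivAt_id t).smul_const d).const_add x
  have hD : ∀ t : ℝ, HasDerivAt ψ
      ((inner ℝ (gradient g (x + t • d)) d : ℝ) - (inner ℝ (gradient g x) d : ℝ)
        - L / 2 * (2 * t) * ‖d‖ ^ 2) t := by
    intro t
    have h1 : HasDerivAt (fun t : ℝ => g (x + t • d))
        ((inner ℝ (gradient g (x + t • d)) d : ℝ)) t := by
      have hf : HasFDerivAt g (toDual ℝ E (gradient g (x + t • d))) (x + t • d) :=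
        ((hg _).hasGradientAt).hasFDerivAt
      have h := hf.comp_hasDerivAt t (hline t)
      rw [InnerProductSpace.toDual_apply_apply] at h
      exact h
    have h2 : HasDerivAt (fun t : ℝ => t * (inner ℝ (gradient g x) d : ℝ))
        ((inner ℝ (gradient g x) d : ℝ)) t := by
      simpa using (hasDerivAt_id t).mul_const (inner ℝ (gradient g x) d : ℝ)
    have h3 : HasDerivAt (fun t : ℝ => L / 2 * t ^ 2 * ‖d‖ ^ 2)
        (L / 2 * (2 * t) * ‖d‖ ^ 2) t := by
      have h := ((hasDerivAt_pow 2 t).const_mul (L / 2)).mul_const (‖d‖ ^ 2)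
      rw [show L / 2 * (2 * t) * ‖d‖ ^ 2 = L / 2 * (((2 : ℕ) : ℝ) * t ^ (2 - 1)) * ‖d‖ ^ 2 by norm_num]
      exact h
    exact (h1.sub h2).sub h3
  have hanti : AntitoneOn ψ (Set.Icc 0 1) := by
    apply antitoneOn_of_deriv_nonpos (convex_Icc 0 1)
    · exact fun t _ => ((hD t).differentiableAt).continuousAt.continuousWithinAt
    · exact fun t _ => ((hD t).differentiableAt).differentiableWithinAt
    · intro t ht
      rw [interior_Icc] at ht
      rw [(hD t).deriv]
      have hinner : (inner ℝ (gradient g (x + t • d)) d : ℝ) - (inner ℝ (gradient g x) d : ℝ)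
          ≤ L * t * ‖d‖ ^ 2 := by
        have h1 : (inner ℝ (gradient g (x + t • d)) d : ℝ) - (inner ℝ (gradient g x) d : ℝ)
            = (inner ℝ (gradient g (x + t • d) - gradient g x) d : ℝ) := by
          rw [inner_sub_left]
        rw [h1]
        calc (inner ℝ (gradient g (x + t • d) - gradient g x) d : ℝ)
            ≤ ‖gradient g (x + t • d) - gradient g x‖ * ‖d‖ := real_inner_le_norm _ _
          _ ≤ (L * ‖x + t • d - x‖) * ‖d‖ := by
              have := hlip (x + t • d) x
              exact mul_le_mul_of_nonneg_right this (norm_nonneg _)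
          _ = L * t * ‖d‖ ^ 2 := by
              rw [add_sub_cancel_left, norm_smul, Real.norm_eq_abs,
                abs_of_pos ht.1]
              ring
      nlinarith [hinner]
  have h01 : ψ 1 ≤ ψ 0 := hanti (Set.left_mem_Icc.2 zero_le_one)
    (Set.right_mem_Icc.2 zero_le_one) zero_le_one
  have he0 : ψ 0 = g x := by simp [hψ]
  have he1 : ψ 1 = g y - (inner ℝ (gradient g x) d : ℝ) - L / 2 * ‖d‖ ^ 2 := by
    simp [hψ, hd]
  rw [he0, he1] at h01
  linarith

/-- One-block estimate for the inertial proximal step. -/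
lemma block_lemma {g : E → ℝ} {L : ℝ} (hg : Differentiable ℝ g) (hL : 0 ≤ L)
    (hlip : ∀ u v, ‖gradient g u - gradient g v‖ ≤ L * ‖u - v‖)
    (xm x xp : E) (α β τ s r rp : ℝ)
    (hα : 0 ≤ α) (hβ : 0 ≤ β) (hτ : 0 < τ) (hs : 0 < s)
    (y z : E) (hy : y = x + α • (x - xm)) (hz : z = x + β • (x - xm))
    (hprox : rp + (τ / 2) * ‖xp - (y - (1 / τ) • gradient g z)‖ ^ 2
      ≤ r + (τ / 2) * ‖x - (y - (1 / τ) • gradient g z)‖ ^ 2) :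
    rp + g xp ≤ r + g x + (1 / s) * (L ^ 2 * β ^ 2 + s * τ * α) * ((1 / 2) * ‖x - xm‖ ^ 2)
      + (L + s - τ * (1 - α)) * ((1 / 2) * ‖xp - x‖ ^ 2) := by
  -- expand the prox inequality
  have hexp : ∀ u : E, ‖u - (y - (1 / τ) • gradient g z)‖ ^ 2
      = ‖u - y‖ ^ 2 + 2 * (1 / τ) * (inner ℝ (u - y) (gradient g z) : ℝ)
        + (1 / τ) ^ 2 * ‖gradient g z‖ ^ 2 := by
    intro u
    have h1 : u - (y - (1 / τ) • gradient g z) = (u - y) + (1 / τ) • gradient g z := by abel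
    rw [h1, norm_add_sq_real, real_inner_smul_right, norm_smul, Real.norm_eq_abs,
      mul_pow, sq_abs]
    ring
  have hA : rp + (τ / 2) * ‖xp - y‖ ^ 2 + (inner ℝ (xp - y) (gradient g z) : ℝ)
      ≤ r + (τ / 2) * ‖x - y‖ ^ 2 + (inner ℝ (x - y) (gradient g z) : ℝ) := by
    have h := hprox
    rw [hexp xp, hexp x] at h
    have hτ' : τ ≠ 0 := ne_of_gt hτ
    have e1 : ∀ A B : ℝ, (τ / 2) * (A + 2 * (1 / τ) * B + (1 / τ) ^ 2 * ‖gradient g z‖ ^ 2)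
        = (τ / 2) * A + B + (1 / τ) / 2 * ‖gradient g z‖ ^ 2 := by
      intro A B; field_simp
    rw [e1, e1] at h
    linarith
  -- descent lemma
  have hB : g xp ≤ g x + (inner ℝ (gradient g x) (xp - x) : ℝ) + L / 2 * ‖xp - x‖ ^ 2 :=
    descent_lemma hg hlip x xp
  -- Lipschitz + Young
  have hxz : ‖x - z‖ = β * ‖x - xm‖ := by
    have h : x - z = -(β • (x - xm)) := by rw [hz]; abel
    rw [h, norm_neg, norm_smul, Real.norm_eq_abs, abs_of_nonneg hβ]
  have hC : (inner ℝ (gradient g x - gradient g z) (xp - x) : ℝ)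
      ≤ L ^ 2 * β ^ 2 / (2 * s) * ‖x - xm‖ ^ 2 + s / 2 * ‖xp - x‖ ^ 2 := by
    have h1 : (inner ℝ (gradient g x - gradient g z) (xp - x) : ℝ)
        ≤ ‖gradient g x - gradient g z‖ * ‖xp - x‖ := real_inner_le_norm _ _
    have h2 : ‖gradient g x - gradient g z‖ ≤ L * (β * ‖x - xm‖) := by
      have h := hlip x z; rw [hxz] at h; exact h
    have h3 : ‖gradient g x - gradient g z‖ * ‖xp - x‖ ≤ L * β * ‖x - xm‖ * ‖xp - x‖ := by
      have := mul_le_mul_of_nonneg_right h2 (norm_nonneg (xp - x))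
      nlinarith [norm_nonneg (xp - x)]
    have h4 : L * β * ‖x - xm‖ * ‖xp - x‖
        ≤ L ^ 2 * β ^ 2 / (2 * s) * ‖x - xm‖ ^ 2 + s / 2 * ‖xp - x‖ ^ 2 := by
      rw [← sub_nonneg]
      have h5 : L ^ 2 * β ^ 2 / (2 * s) * ‖x - xm‖ ^ 2 + s / 2 * ‖xp - x‖ ^ 2
          - L * β * ‖x - xm‖ * ‖xp - x‖
          = (L * β * ‖x - xm‖ - s * ‖xp - x‖) ^ 2 / (2 * s) := by
        field_simp; ring
      rw [h5]; positivity
    linarith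
  -- y-term expansions
  have hxy : ‖x - y‖ ^ 2 = α ^ 2 * ‖x - xm‖ ^ 2 := by
    have h : x - y = -(α • (x - xm)) := by rw [hy]; abel
    rw [h, norm_neg, norm_smul, Real.norm_eq_abs, mul_pow, sq_abs]
  have hxpy : ‖xp - y‖ ^ 2 = ‖xp - x‖ ^ 2 - 2 * α * (inner ℝ (xp - x) (x - xm) : ℝ)
      + α ^ 2 * ‖x - xm‖ ^ 2 := by
    have h1 : xp - y = (xp - x) - α • (x - xm) := by rw [hy]; abel
    rw [h1, norm_sub_sq_real, real_inner_smul_right, norm_smul, Real.norm_eq_abs,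
      mul_pow, sq_abs]
    ring
  have hy2 : (τ / 2) * ‖x - y‖ ^ 2 - (τ / 2) * ‖xp - y‖ ^ 2
      = τ * α * (inner ℝ (xp - x) (x - xm) : ℝ) - (τ / 2) * ‖xp - x‖ ^ 2 := by
    rw [hxy, hxpy]; ring
  have hEd : (inner ℝ (xp - x) (x - xm) : ℝ) ≤ (‖xp - x‖ ^ 2 + ‖x - xm‖ ^ 2) / 2 := by
    have h1 : (inner ℝ (xp - x) (x - xm) : ℝ) ≤ ‖xp - x‖ * ‖x - xm‖ := real_inner_le_norm _ _
    nlinarith [sq_nonneg (‖xp - x‖ - ‖x - xm‖)]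
  have hE : τ * α * (inner ℝ (xp - x) (x - xm) : ℝ)
      ≤ τ * α * ((‖xp - x‖ ^ 2 + ‖x - xm‖ ^ 2) / 2) :=
    mul_le_mul_of_nonneg_left hEd (by positivity)
  -- inner-product identity
  have hid : (inner ℝ (x - y) (gradient g z) : ℝ) - (inner ℝ (xp - y) (gradient g z) : ℝ)
      + (inner ℝ (gradient g x) (xp - x) : ℝ)
      = (inner ℝ (gradient g x - gradient g z) (xp - x) : ℝ) := by
    rw [← inner_sub_left (x - y) (xp - y) (gradient g z),
      show (x - y) - (xp - y) = -(xp - x) from by abel,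
      inner_neg_left, inner_sub_left (gradient g x) (gradient g z) (xp - x),
      real_inner_comm (xp - x) (gradient g z)]
    ring
  have hfin : (1 / s) * (L ^ 2 * β ^ 2 + s * τ * α) * ((1 / 2) * ‖x - xm‖ ^ 2)
      = L ^ 2 * β ^ 2 / (2 * s) * ‖x - xm‖ ^ 2 + τ * α * (‖x - xm‖ ^ 2 / 2) := by
    field_simp
  rw [hfin] at *
  linarith [hA, hB, hC, hE, hid, hy2]



/-- Proposition 4.2 of the paper: one-step descent estimate for iPALM
with free parameters `s1, s2 > 0`.
Here `F(x1,x2) = f1(x1) + f2(x2) + H(x1,x2)` with `f1, f2` proper, lower semicontinuous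
and bounded below, and `H` differentiable in each block with partial gradients
`L1(x2)`- resp. `L2(x1)`-Lipschitz.  One iPALM step at stage `k` produces
`x1⁺ ∈ prox_{τ1}^{f1}(y1 − (1/τ1)∇_{x1}H(z1, x2))` and
`x2⁺ ∈ prox_{τ2}^{f2}(y2 − (1/τ2)∇_{x2}H(x1⁺, z2))`, where
`y_i, z_i` are the inertial extrapolation points.  With
`Δ1 = ½‖x1 − x1⁻‖²`, `Δ2 = ½‖x2 − x2⁻‖²`, `Δ1⁺ = ½‖x1⁺ − x1‖²`, `Δ2⁺ = ½‖x2⁺ − x2‖²`: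
`F(x1⁺,x2⁺) ≤ F(x1,x2) + (1/s1)(L1(x2)²β1² + s1·τ1·α1)·Δ1
 + (1/s2)(L2(x1⁺)²β2² + s2·τ2·α2)·Δ2 + (L1(x2) + s1 − τ1(1−α1))·Δ1⁺
 + (L2(x1⁺) + s2 − τ2(1−α2))·Δ2⁺`. -/
theorem stmt_7 {n1 n2 : ℕ}
    (f1 : EuclideanSpace ℝ (Fin n1) → EReal) (f2 : EuclideanSpace ℝ (Fin n2) → EReal)
    (H : EuclideanSpace ℝ (Fin n1) → EuclideanSpace ℝ (Fin n2) → ℝ)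
    (L1 : EuclideanSpace ℝ (Fin n2) → ℝ) (L2 : EuclideanSpace ℝ (Fin n1) → ℝ)
    -- f1, f2 proper, lower semicontinuous and bounded below
    (hf1proper : ∃ x, f1 x ≠ ⊤) (hf1nobot : ∀ x, f1 x ≠ ⊥)
    (hf1lsc : LowerSemicontinuous f1) (hf1bdd : ∃ m : ℝ, ∀ x, (m : EReal) ≤ f1 x)
    (hf2proper : ∃ x, f2 x ≠ ⊤) (hf2nobot : ∀ x, f2 x ≠ ⊥)
    (hf2lsc : LowerSemicontinuous f2) (hf2bdd : ∃ m : ℝ, ∀ x, (m : EReal) ≤ f2 x)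
    -- H differentiable in each block with Lipschitz partial gradients
    (hH1 : ∀ x2, Differentiable ℝ (fun x1 => H x1 x2))
    (hH2 : ∀ x1, Differentiable ℝ (fun x2 => H x1 x2))
    (hL1nonneg : ∀ x2, 0 ≤ L1 x2) (hL2nonneg : ∀ x1, 0 ≤ L2 x1)
    (hL1lip : ∀ x2 u v, ‖gradient (fun x1 => H x1 x2) u - gradient (fun x1 => H x1 x2) v‖
      ≤ L1 x2 * ‖u - v‖)
    (hL2lip : ∀ x1 u v, ‖gradient (fun x2 => H x1 x2) u - gradient (fun x2 => H x1 x2) v‖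
      ≤ L2 x1 * ‖u - v‖)
    -- iterates at steps k-1, k, k+1 and parameters of step k
    (x1km1 x1k x1kp1 : EuclideanSpace ℝ (Fin n1))
    (x2km1 x2k x2kp1 : EuclideanSpace ℝ (Fin n2))
    (α1 β1 τ1 α2 β2 τ2 s1 s2 : ℝ)
    (hα1 : α1 ∈ Set.Icc (0 : ℝ) 1) (hβ1 : β1 ∈ Set.Icc (0 : ℝ) 1) (hτ1 : 0 < τ1)
    (hα2 : α2 ∈ Set.Icc (0 : ℝ) 1) (hβ2 : β2 ∈ Set.Icc (0 : ℝ) 1) (hτ2 : 0 < τ2)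
    (hs1 : 0 < s1) (hs2 : 0 < s2)
    (y1 z1 : EuclideanSpace ℝ (Fin n1)) (y2 z2 : EuclideanSpace ℝ (Fin n2))
    (hy1 : y1 = x1k + α1 • (x1k - x1km1)) (hz1 : z1 = x1k + β1 • (x1k - x1km1))
    (hy2 : y2 = x2k + α2 • (x2k - x2km1)) (hz2 : z2 = x2k + β2 • (x2k - x2km1))
    -- x1kp1 ∈ prox_{τ1}^{f1}(y1 − (1/τ1)∇_{x1}H(z1, x2k))
    (hprox1 : ∀ q : EuclideanSpace ℝ (Fin n1),
      f1 x1kp1 + (((τ1 / 2) *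
          ‖x1kp1 - (y1 - (1 / τ1) • gradient (fun a => H a x2k) z1)‖ ^ 2 : ℝ) : EReal)
        ≤ f1 q + (((τ1 / 2) *
          ‖q - (y1 - (1 / τ1) • gradient (fun a => H a x2k) z1)‖ ^ 2 : ℝ) : EReal))
    -- x2kp1 ∈ prox_{τ2}^{f2}(y2 − (1/τ2)∇_{x2}H(x1kp1, z2))
    (hprox2 : ∀ q : EuclideanSpace ℝ (Fin n2),
      f2 x2kp1 + (((τ2 / 2) *
          ‖x2kp1 - (y2 - (1 / τ2) • gradient (fun b => H x1kp1 b) z2)‖ ^ 2 : ℝ) : EReal)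
        ≤ f2 q + (((τ2 / 2) *
          ‖q - (y2 - (1 / τ2) • gradient (fun b => H x1kp1 b) z2)‖ ^ 2 : ℝ) : EReal)) :
    f1 x1kp1 + f2 x2kp1 + (H x1kp1 x2kp1 : EReal)
      ≤ f1 x1k + f2 x2k + (H x1k x2k : EReal)
        + (((1 / s1) * ((L1 x2k) ^ 2 * β1 ^ 2 + s1 * τ1 * α1) * ((1 / 2) * ‖x1k - x1km1‖ ^ 2)
            + (1 / s2) * ((L2 x1kp1) ^ 2 * β2 ^ 2 + s2 * τ2 * α2) * ((1 / 2) * ‖x2k - x2km1‖ ^ 2)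
            + (L1 x2k + s1 - τ1 * (1 - α1)) * ((1 / 2) * ‖x1kp1 - x1k‖ ^ 2)
            + (L2 x1kp1 + s2 - τ2 * (1 - α2)) * ((1 / 2) * ‖x2kp1 - x2k‖ ^ 2) : ℝ) : EReal) := by
  classical
  -- x1kp1 and x2kp1 have finite f-values
  have hne1p : f1 x1kp1 ≠ ⊤ := by
    intro h
    obtain ⟨x0, hx0⟩ := hf1proper
    have h2 := hprox1 x0
    rw [h, EReal.top_add_of_ne_bot (EReal.coe_ne_bot _)] at h2
    exact (EReal.add_lt_top hx0 (EReal.coe_ne_top _)).ne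
      (top_le_iff.mp h2)
  have hne2p : f2 x2kp1 ≠ ⊤ := by
    intro h
    obtain ⟨x0, hx0⟩ := hf2proper
    have h2 := hprox2 x0
    rw [h, EReal.top_add_of_ne_bot (EReal.coe_ne_bot _)] at h2
    exact (EReal.add_lt_top hx0 (EReal.coe_ne_top _)).ne
      (top_le_iff.mp h2)
  by_cases h1top : f1 x1k = ⊤
  · rw [h1top, EReal.top_add_of_ne_bot (hf2nobot x2k),
      EReal.top_add_of_ne_bot (EReal.coe_ne_bot _),
      EReal.top_add_of_ne_bot (EReal.coe_ne_bot _)]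
    exact le_top
  by_cases h2top : f2 x2k = ⊤
  · rw [h2top, EReal.add_top_of_ne_bot (hf1nobot x1k),
      EReal.top_add_of_ne_bot (EReal.coe_ne_bot _),
      EReal.top_add_of_ne_bot (EReal.coe_ne_bot _)]
    exact le_top
  -- real representatives
  set r1p := (f1 x1kp1).toReal with hr1pdef
  set r2p := (f2 x2kp1).toReal with hr2pdef
  set r1 := (f1 x1k).toReal with hr1def
  set r2 := (f2 x2k).toReal with hr2def
  have hr1p : ((r1p : ℝ) : EReal) = f1 x1kp1 := EReal.coe_toReal hne1p (hf1nobot _)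
  have hr2p : ((r2p : ℝ) : EReal) = f2 x2kp1 := EReal.coe_toReal hne2p (hf2nobot _)
  have hr1 : ((r1 : ℝ) : EReal) = f1 x1k := EReal.coe_toReal h1top (hf1nobot _)
  have hr2 : ((r2 : ℝ) : EReal) = f2 x2k := EReal.coe_toReal h2top (hf2nobot _)
  -- real prox inequalities
  have hP1 : r1p + (τ1 / 2) * ‖x1kp1 - (y1 - (1 / τ1) • gradient (fun a => H a x2k) z1)‖ ^ 2
      ≤ r1 + (τ1 / 2) * ‖x1k - (y1 - (1 / τ1) • gradient (fun a => H a x2k) z1)‖ ^ 2 := by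
    have h := hprox1 x1k
    rw [← hr1p, ← hr1] at h
    exact_mod_cast h
  have hP2 : r2p + (τ2 / 2) * ‖x2kp1 - (y2 - (1 / τ2) • gradient (fun b => H x1kp1 b) z2)‖ ^ 2
      ≤ r2 + (τ2 / 2) * ‖x2k - (y2 - (1 / τ2) • gradient (fun b => H x1kp1 b) z2)‖ ^ 2 := by
    have h := hprox2 x2k
    rw [← hr2p, ← hr2] at h
    exact_mod_cast h
  -- block estimates
  have hb1 := block_lemma (g := fun a => H a x2k) (hH1 x2k) (hL1nonneg x2k) (hL1lip x2k)
    x1km1 x1k x1kp1 α1 β1 τ1 s1 r1 r1p hα1.1 hβ1.1 hτ1 hs1 y1 z1 hy1 hz1 hP1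
  have hb2 := block_lemma (g := fun b => H x1kp1 b) (hH2 x1kp1) (hL2nonneg x1kp1)
    (hL2lip x1kp1) x2km1 x2k x2kp1 α2 β2 τ2 s2 r2 r2p hα2.1 hβ2.1 hτ2 hs2 y2 z2 hy2 hz2 hP2
  have hsum : r1p + r2p + H x1kp1 x2kp1
      ≤ r1 + r2 + H x1k x2k
        + ((1 / s1) * ((L1 x2k) ^ 2 * β1 ^ 2 + s1 * τ1 * α1) * ((1 / 2) * ‖x1k - x1km1‖ ^ 2)
          + (1 / s2) * ((L2 x1kp1) ^ 2 * β2 ^ 2 + s2 * τ2 * α2) * ((1 / 2) * ‖x2k - x2km1‖ ^ 2)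
          + (L1 x2k + s1 - τ1 * (1 - α1)) * ((1 / 2) * ‖x1kp1 - x1k‖ ^ 2)
          + (L2 x1kp1 + s2 - τ2 * (1 - α2)) * ((1 / 2) * ‖x2kp1 - x2k‖ ^ 2)) := by
    linarith [hb1, hb2]
  rw [← hr1p, ← hr2p, ← hr1, ← hr2]
  exact_mod_cast hsum
end

section
/- Let H : ℝ^{n1} × ℝ^{n2} → ℝ be differentiable and suppose ∇H is M-Lipschitz continuous on a set B ⊆ ℝ^{n1} × ℝ^{n2}. Let x^{k} = (x1^{k}, x2^{k}), x^{k−1}, x^{k−2} be iterates with x^k, x^{k−1} ∈ B, let α1^{k−1}, β1^{k−1} ∈ [0,1], let z1^{k−1} = x1^{k−1} + β1^{k−1}(x1^{k−1} − x1^{k−2}) with (z1^{k−1}, x2^{k−1}) ∈ B, and let 0 < τ1^{k−1} ≤ τ1⁺. Define v1^k := ∇_{x1}H(x1^k, x2^k) − ∇_{x1}H(z1^{k−1}, x2^{k−1}) + τ1^{k−1}(x1^{k−1} − x1^k + α1^{k−1}(x1^{k−1} − x1^{k−2})). Then ‖v1^k‖ ≤ (τ1⁺ + M)(‖x^k − x^{k−1}‖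 + ‖x^{k−1} − x^{k−2}‖). -/
/-! The gradient difference is controlled by the Lipschitz bound at `x^k` and the extrapolated
point `(z1^{k−1}, x2^{k−1})`, whose first block differs from `x1^k` by at most
`‖x1^k − x1^{k−1}‖ + ‖x1^{k−1} − x1^{k−2}‖` because `β1 ≤ 1`; the proximal term is bounded the same
way because `α1 ≤ 1` and `τ1^{k−1} ≤ τ1⁺`. Each block norm is at most the norm of the pair. -/

open Real

lemma le_sqrt_sq_add_sq (a b : ℝ) : a ≤ √(a ^ 2 + b ^ 2) :=
  le_sqrt_of_sq_le (le_add_of_nonneg_right (sq_nonneg b))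

lemma sqrt_sq_add_sq_le_add {x y c : ℝ} (b : ℝ) (hx : 0 ≤ x) (hc : 0 ≤ c) (h : x ≤ y + c) :
    √(x ^ 2 + b ^ 2) ≤ √(y ^ 2 + b ^ 2) + c := by
  have hy : y ≤ √(y ^ 2 + b ^ 2) := le_sqrt_sq_add_sq y b
  have hsq : √(y ^ 2 + b ^ 2) ^ 2 = y ^ 2 + b ^ 2 := sq_sqrt (by positivity)
  have hx2 : x ^ 2 ≤ (y + c) ^ 2 := pow_le_pow_left₀ hx h 2
  rw [sqrt_le_left (by linarith)]
  nlinarith [mul_le_mul_of_nonneg_right hy hc]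

section NormedSpace

variable {𝕜 E : Type*} [NormedField 𝕜] [SeminormedAddCommGroup E] [NormedSpace 𝕜 E]

lemma norm_smul_le_of_norm_le_one {t : 𝕜} (ht : ‖t‖ ≤ 1) (w : E) : ‖t • w‖ ≤ ‖w‖ := by
  rw [norm_smul]
  exact mul_le_of_le_one_left (norm_nonneg w) ht

lemma norm_add_smul_le {t : 𝕜} (ht : ‖t‖ ≤ 1) (u w : E) : ‖u + t • w‖ ≤ ‖u‖ + ‖w‖ :=
  (norm_add_le _ _).trans (add_le_add_right (norm_smul_le_of_norm_le_one ht w) _)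

lemma norm_sub_smul_le {t : 𝕜} (ht : ‖t‖ ≤ 1) (u w : E) : ‖u - t • w‖ ≤ ‖u‖ + ‖w‖ :=
  (norm_sub_le _ _).trans (add_le_add_right (norm_smul_le_of_norm_le_one ht w) _)

end NormedSpace

lemma Real.norm_le_one_of_mem_Icc {t : ℝ} (ht : t ∈ Set.Icc (0 : ℝ) 1) : ‖t‖ ≤ 1 := by
  rw [norm_of_nonneg ht.1]
  exact ht.2

theorem stmt_11_general {n1 n2 : ℕ}
    (H : EuclideanSpace ℝ (Fin n1) → EuclideanSpace ℝ (Fin n2) → ℝ)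
    (B : Set (EuclideanSpace ℝ (Fin n1) × EuclideanSpace ℝ (Fin n2)))
    (M : ℝ) (hM0 : 0 ≤ M)
    -- ∇H is M-Lipschitz on B:  ‖∇H(p) − ∇H(q)‖ ≤ M‖p − q‖ for p, q ∈ B,
    -- where ‖(a, b)‖ = √(‖a‖² + ‖b‖²)
    (hMlip : ∀ p q : EuclideanSpace ℝ (Fin n1) × EuclideanSpace ℝ (Fin n2),
      p ∈ B → q ∈ B →
      Real.sqrt (‖gradient (fun a => H a p.2) p.1 - gradient (fun a => H a q.2) q.1‖ ^ 2
          + ‖gradient (fun b => H p.1 b) p.2 - gradient (fun b => H q.1 b) q.2‖ ^ 2)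
        ≤ M * Real.sqrt (‖p.1 - q.1‖ ^ 2 + ‖p.2 - q.2‖ ^ 2))
    -- iterates x^k, x^{k−1}, x^{k−2}
    (x1k x1km1 x1km2 : EuclideanSpace ℝ (Fin n1))
    (x2k x2km1 x2km2 : EuclideanSpace ℝ (Fin n2))
    (hxkB : (x1k, x2k) ∈ B)
    (α1 β1 : ℝ) (hα1 : α1 ∈ Set.Icc (0 : ℝ) 1) (hβ1 : β1 ∈ Set.Icc (0 : ℝ) 1)
    (z1km1 : EuclideanSpace ℝ (Fin n1))
    (hz1 : z1km1 = x1km1 + β1 • (x1km1 - x1km2))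
    (hzB : (z1km1, x2km1) ∈ B)
    (τ1km1 τ1plus : ℝ) (hτpos : 0 < τ1km1) (hττ : τ1km1 ≤ τ1plus)
    (v1k : EuclideanSpace ℝ (Fin n1))
    (hv1 : v1k = gradient (fun a => H a x2k) x1k - gradient (fun a => H a x2km1) z1km1
      + τ1km1 • (x1km1 - x1k + α1 • (x1km1 - x1km2))) :
    ‖v1k‖ ≤ (τ1plus + M) * (Real.sqrt (‖x1k - x1km1‖ ^ 2 + ‖x2k - x2km1‖ ^ 2)
      + Real.sqrt (‖x1km1 - x1km2‖ ^ 2 + ‖x2km1 - x2km2‖ ^ 2)) := by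
  set sA := √(‖x1k - x1km1‖ ^ 2 + ‖x2k - x2km1‖ ^ 2)
  set sB := √(‖x1km1 - x1km2‖ ^ 2 + ‖x2km1 - x2km2‖ ^ 2)
  have hA : ‖x1k - x1km1‖ ≤ sA := le_sqrt_sq_add_sq _ _
  have hB : ‖x1km1 - x1km2‖ ≤ sB := le_sqrt_sq_add_sq _ _
  have hextrap : ‖x1k - z1km1‖ ≤ ‖x1k - x1km1‖ + ‖x1km1 - x1km2‖ := by
    rw [hz1, ← sub_sub]
    exact norm_sub_smul_le (norm_le_one_of_mem_Icc hβ1) _ _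
  have hgrad : ‖gradient (fun a => H a x2k) x1k - gradient (fun a => H a x2km1) z1km1‖
      ≤ M * (sA + sB) := calc
    _ ≤ M * √(‖x1k - z1km1‖ ^ 2 + ‖x2k - x2km1‖ ^ 2) :=
      (le_sqrt_sq_add_sq _ _).trans (hMlip (x1k, x2k) (z1km1, x2km1) hxkB hzB)
    _ ≤ M * (sA + sB) := by
      gcongr
      exact sqrt_sq_add_sq_le_add _ (norm_nonneg _) (norm_nonneg _) hextrap |>.trans (by gcongr)
  have hprox : ‖τ1km1 • (x1km1 - x1k + α1 • (x1km1 - x1km2))‖ ≤ τ1plus * (sA + sB) := by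
    rw [norm_smul, norm_of_nonneg hτpos.le]
    refine mul_le_mul hττ ?_ (norm_nonneg _) (hτpos.le.trans hττ)
    calc _ ≤ ‖x1km1 - x1k‖ + ‖x1km1 - x1km2‖ := norm_add_smul_le (norm_le_one_of_mem_Icc hα1) _ _
      _ ≤ sA + sB := by rw [norm_sub_rev]; gcongr
  calc ‖v1k‖ ≤ _ := hv1 ▸ norm_add_le _ _
    _ ≤ M * (sA + sB) + τ1plus * (sA + sB) := add_le_add hgrad hprox
    _ = (τ1plus + M) * (sA + sB) := by ring

/-- bound on the first block of the subgradient, from Proposition 4.8.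
`H : ℝ^{n1} × ℝ^{n2} → ℝ` is differentiable (in each block, so that
`∇H(x1,x2) = (∇_{x1}H(x1,x2), ∇_{x2}H(x1,x2))`) and `∇H` is `M`-Lipschitz on
`B ⊆ ℝ^{n1} × ℝ^{n2}` for the Euclidean norm on pairs `‖(a,b)‖ = √(‖a‖² + ‖b‖²)`.
With iterates `x^k, x^{k−1} ∈ B`, `α1, β1 ∈ [0,1]`,
`z1^{k−1} = x1^{k−1} + β1(x1^{k−1} − x1^{k−2})`, `(z1^{k−1}, x2^{k−1}) ∈ B`,
`0 < τ1^{k−1} ≤ τ1⁺`, and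
`v1^k = ∇_{x1}H(x1^k, x2^k) − ∇_{x1}H(z1^{k−1}, x2^{k−1})
  + τ1^{k−1}(x1^{k−1} − x1^k + α1(x1^{k−1} − x1^{k−2}))`,
one has `‖v1^k‖ ≤ (τ1⁺ + M)(‖x^k − x^{k−1}‖ + ‖x^{k−1} − x^{k−2}‖)`. -/
theorem stmt_11 {n1 n2 : ℕ}
    (H : EuclideanSpace ℝ (Fin n1) → EuclideanSpace ℝ (Fin n2) → ℝ)
    (hH1 : ∀ x2, Differentiable ℝ (fun x1 => H x1 x2))
    (hH2 : ∀ x1, Differentiable ℝ (fun x2 => H x1 x2))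
    (B : Set (EuclideanSpace ℝ (Fin n1) × EuclideanSpace ℝ (Fin n2)))
    (M : ℝ) (hM0 : 0 ≤ M)
    -- ∇H is M-Lipschitz on B:  ‖∇H(p) − ∇H(q)‖ ≤ M‖p − q‖ for p, q ∈ B,
    -- where ‖(a, b)‖ = √(‖a‖² + ‖b‖²)
    (hMlip : ∀ p q : EuclideanSpace ℝ (Fin n1) × EuclideanSpace ℝ (Fin n2),
      p ∈ B → q ∈ B →
      Real.sqrt (‖gradient (fun a => H a p.2) p.1 - gradient (fun a => H a q.2) q.1‖ ^ 2
          + ‖gradient (fun b => H p.1 b) p.2 - gradient (fun b => H q.1 b) q.2‖ ^ 2)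
        ≤ M * Real.sqrt (‖p.1 - q.1‖ ^ 2 + ‖p.2 - q.2‖ ^ 2))
    -- iterates x^k, x^{k−1}, x^{k−2}
    (x1k x1km1 x1km2 : EuclideanSpace ℝ (Fin n1))
    (x2k x2km1 x2km2 : EuclideanSpace ℝ (Fin n2))
    (hxkB : (x1k, x2k) ∈ B) (hxkm1B : (x1km1, x2km1) ∈ B)
    (α1 β1 : ℝ) (hα1 : α1 ∈ Set.Icc (0 : ℝ) 1) (hβ1 : β1 ∈ Set.Icc (0 : ℝ) 1)
    (z1km1 : EuclideanSpace ℝ (Fin n1))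
    (hz1 : z1km1 = x1km1 + β1 • (x1km1 - x1km2))
    (hzB : (z1km1, x2km1) ∈ B)
    (τ1km1 τ1plus : ℝ) (hτpos : 0 < τ1km1) (hττ : τ1km1 ≤ τ1plus)
    (v1k : EuclideanSpace ℝ (Fin n1))
    (hv1 : v1k = gradient (fun a => H a x2k) x1k - gradient (fun a => H a x2km1) z1km1
      + τ1km1 • (x1km1 - x1k + α1 • (x1km1 - x1km2))) :
    ‖v1k‖ ≤ (τ1plus + M) * (Real.sqrt (‖x1k - x1km1‖ ^ 2 + ‖x2k - x2km1‖ ^ 2)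
      + Real.sqrt (‖x1km1 - x1km2‖ ^ 2 + ‖x2km1 - x2km2‖ ^ 2)) :=
  stmt_11_general H B M hM0 hMlip x1k x1km1 x1km2 x2k x2km1 x2km2 hxkB α1 β1 hα1 hβ1 z1km1 hz1 hzB
    τ1km1 τ1plus hτpos hττ v1k hv1
end

section
/- Let H : ℝ^{n1} × ℝ^{n2} → ℝ be differentiable such that for each fixed x1 the map x2 ↦ ∇_{x2}H(x1, x2) is L2(x1)-Lipschitz, with L2(x1^k) ≤ λ2⁺. Let x^{k} = (x1^{k}, x2^{k}), x^{k−1}, x^{k−2} be iterates, let α2^{k−1}, β2^{k−1} ∈ [0,1], let z2^{k−1} = x2^{k−1} + β2^{k−1}(x2^{k−1} − x2^{k−2}), and let 0 < τ2^{k−1} ≤ τ2⁺. Define v2^k := ∇_{x2}H(x1^k, x2^k) − ∇_{x2}H(x1^k, z2^{k−1}) + τ2^{k−1}(x2^{k−1} − x2^k + α2^{k−1}(x2^{k−1} − x2^{k−2})). Then ‖v2^k‖ ≤ (τ2⁺ + λ2⁺)(‖x^k − x^{k−1}‖ + ‖x^{k−1} − x^{k−2}‖). -/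
/-! Split `v₂ᵏ` into the gradient difference and the inertial term. The first is at most
`λ₂⁺ ‖x₂ᵏ − z₂ᵏ⁻¹‖` by the Lipschitz bound, the second at most `τ₂⁺` times the norm of its
argument, and both vectors are a step `x₂ᵏ − x₂ᵏ⁻¹` plus a multiple of weight at most one of
`x₂ᵏ⁻¹ − x₂ᵏ⁻²`. Each block step is bounded by the step of the full pair. -/

lemma norm_add_smul_le_of_abs_le_one {E : Type*} [SeminormedAddCommGroup E] [NormedSpace ℝ E]
    (a b : E) {c : ℝ} (hc : |c| ≤ 1) : ‖a + c • b‖ ≤ ‖a‖ + ‖b‖ :=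
  calc ‖a + c • b‖ ≤ ‖a‖ + |c| * ‖b‖ := by
        simpa only [norm_smul, Real.norm_eq_abs] using norm_add_le a (c • b)
    _ ≤ ‖a‖ + ‖b‖ := by
        gcongr
        exact mul_le_of_le_one_left (norm_nonneg b) hc

lemma norm_le_sqrt_sq_add_sq {E F : Type*} [SeminormedAddCommGroup E]
    [SeminormedAddCommGroup F] (x : E) (y : F) : ‖y‖ ≤ Real.sqrt (‖x‖ ^ 2 + ‖y‖ ^ 2) :=
  Real.le_sqrt_of_sq_le (le_add_of_nonneg_left (sq_nonneg _))

lemma abs_le_one_of_mem_Icc {c : ℝ} (hc : c ∈ Set.Icc (0 : ℝ) 1) : |c| ≤ 1 :=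
  abs_le.mpr ⟨by linarith [hc.1], hc.2⟩

theorem stmt_12_general {n1 n2 : ℕ}
    (H : EuclideanSpace ℝ (Fin n1) → EuclideanSpace ℝ (Fin n2) → ℝ)
    (L2 : EuclideanSpace ℝ (Fin n1) → ℝ) (hL2nonneg : ∀ x1, 0 ≤ L2 x1)
    (hL2lip : ∀ x1 u v, ‖gradient (fun x2 => H x1 x2) u - gradient (fun x2 => H x1 x2) v‖
      ≤ L2 x1 * ‖u - v‖)
    -- iterates x^k, x^{k−1}, x^{k−2}
    (x1k x1km1 x1km2 : EuclideanSpace ℝ (Fin n1))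
    (x2k x2km1 x2km2 : EuclideanSpace ℝ (Fin n2))
    (lam2plus : ℝ) (hlam : L2 x1k ≤ lam2plus)
    (α2 β2 : ℝ) (hα2 : α2 ∈ Set.Icc (0 : ℝ) 1) (hβ2 : β2 ∈ Set.Icc (0 : ℝ) 1)
    (z2km1 : EuclideanSpace ℝ (Fin n2))
    (hz2 : z2km1 = x2km1 + β2 • (x2km1 - x2km2))
    (τ2km1 τ2plus : ℝ) (hτpos : 0 < τ2km1) (hττ : τ2km1 ≤ τ2plus)
    (v2k : EuclideanSpace ℝ (Fin n2))
    (hv2 : v2k = gradient (fun b => H x1k b) x2k - gradient (fun b => H x1k b) z2km1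
      + τ2km1 • (x2km1 - x2k + α2 • (x2km1 - x2km2))) :
    ‖v2k‖ ≤ (τ2plus + lam2plus) * (Real.sqrt (‖x1k - x1km1‖ ^ 2 + ‖x2k - x2km1‖ ^ 2)
      + Real.sqrt (‖x1km1 - x1km2‖ ^ 2 + ‖x2km1 - x2km2‖ ^ 2)) := by
  set d := ‖x2k - x2km1‖ + ‖x2km1 - x2km2‖
  have hz : ‖x2k - z2km1‖ ≤ d := by
    have hβ : |-β2| ≤ 1 := by simpa only [abs_neg] using abs_le_one_of_mem_Icc hβ2
    simpa only [hz2, sub_add_eq_sub_sub, neg_smul, ← sub_eq_add_neg] using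
      norm_add_smul_le_of_abs_le_one (x2k - x2km1) (x2km1 - x2km2) hβ
  have hinertial : ‖x2km1 - x2k + α2 • (x2km1 - x2km2)‖ ≤ d := by
    simpa only [norm_sub_rev x2km1 x2k] using
      norm_add_smul_le_of_abs_le_one (x2km1 - x2k) (x2km1 - x2km2) (abs_le_one_of_mem_Icc hα2)
  have hd : d ≤ Real.sqrt (‖x1k - x1km1‖ ^ 2 + ‖x2k - x2km1‖ ^ 2)
      + Real.sqrt (‖x1km1 - x1km2‖ ^ 2 + ‖x2km1 - x2km2‖ ^ 2) :=
    add_le_add (norm_le_sqrt_sq_add_sq _ _) (norm_le_sqrt_sq_add_sq _ _)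
  have hlam_nonneg : 0 ≤ lam2plus := (hL2nonneg x1k).trans hlam
  calc ‖v2k‖ ≤ L2 x1k * ‖x2k - z2km1‖ + τ2km1 * ‖x2km1 - x2k + α2 • (x2km1 - x2km2)‖ := by
        rw [hv2]
        refine (norm_add_le _ _).trans (add_le_add (hL2lip x1k x2k z2km1) ?_)
        rw [norm_smul, Real.norm_of_nonneg hτpos.le]
    _ ≤ lam2plus * d + τ2plus * d :=
        add_le_add (mul_le_mul hlam hz (norm_nonneg _) hlam_nonneg)
          (mul_le_mul hττ hinertial (norm_nonneg _) (hτpos.le.trans hττ))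
    _ = (τ2plus + lam2plus) * d := by ring
    _ ≤ _ := mul_le_mul_of_nonneg_left hd (by linarith)

/-- bound on the second block of the subgradient, from Proposition 4.8.
`H : ℝ^{n1} × ℝ^{n2} → ℝ` is differentiable in each block and, for each fixed `x1`,
`x2 ↦ ∇_{x2}H(x1, x2)` is `L2(x1)`-Lipschitz, with `L2(x1^k) ≤ λ2⁺`.  With iterates
`x^k, x^{k−1}, x^{k−2}`, `α2, β2 ∈ [0,1]`,
`z2^{k−1} = x2^{k−1} + β2(x2^{k−1} − x2^{k−2})`, `0 < τ2^{k−1} ≤ τ2⁺`, and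
`v2^k = ∇_{x2}H(x1^k, x2^k) − ∇_{x2}H(x1^k, z2^{k−1})
  + τ2^{k−1}(x2^{k−1} − x2^k + α2(x2^{k−1} − x2^{k−2}))`,
one has `‖v2^k‖ ≤ (τ2⁺ + λ2⁺)(‖x^k − x^{k−1}‖ + ‖x^{k−1} − x^{k−2}‖)`, where the norm on
pairs is `‖(a,b)‖ = √(‖a‖² + ‖b‖²)`. -/
theorem stmt_12 {n1 n2 : ℕ}
    (H : EuclideanSpace ℝ (Fin n1) → EuclideanSpace ℝ (Fin n2) → ℝ)
    (hH1 : ∀ x2, Differentiable ℝ (fun x1 => H x1 x2))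
    (hH2 : ∀ x1, Differentiable ℝ (fun x2 => H x1 x2))
    (L2 : EuclideanSpace ℝ (Fin n1) → ℝ) (hL2nonneg : ∀ x1, 0 ≤ L2 x1)
    (hL2lip : ∀ x1 u v, ‖gradient (fun x2 => H x1 x2) u - gradient (fun x2 => H x1 x2) v‖
      ≤ L2 x1 * ‖u - v‖)
    -- iterates x^k, x^{k−1}, x^{k−2}
    (x1k x1km1 x1km2 : EuclideanSpace ℝ (Fin n1))
    (x2k x2km1 x2km2 : EuclideanSpace ℝ (Fin n2))
    (lam2plus : ℝ) (hlam : L2 x1k ≤ lam2plus)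
    (α2 β2 : ℝ) (hα2 : α2 ∈ Set.Icc (0 : ℝ) 1) (hβ2 : β2 ∈ Set.Icc (0 : ℝ) 1)
    (z2km1 : EuclideanSpace ℝ (Fin n2))
    (hz2 : z2km1 = x2km1 + β2 • (x2km1 - x2km2))
    (τ2km1 τ2plus : ℝ) (hτpos : 0 < τ2km1) (hττ : τ2km1 ≤ τ2plus)
    (v2k : EuclideanSpace ℝ (Fin n2))
    (hv2 : v2k = gradient (fun b => H x1k b) x2k - gradient (fun b => H x1k b) z2km1
      + τ2km1 • (x2km1 - x2k + α2 • (x2km1 - x2km2))) :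
    ‖v2k‖ ≤ (τ2plus + lam2plus) * (Real.sqrt (‖x1k - x1km1‖ ^ 2 + ‖x2k - x2km1‖ ^ 2)
      + Real.sqrt (‖x1km1 - x1km2‖ ^ 2 + ‖x2km1 - x2km2‖ ^ 2)) :=
  stmt_12_general H L2 hL2nonneg hL2lip x1k x1km1 x1km2 x2k x2km1 x2km2 lam2plus hlam α2 β2 hα2 hβ2
    z2km1 hz2 τ2km1 τ2plus hτpos hττ v2k hv2
end
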